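/- For all integers p ≥ 1, r ≥ 0 and n ≥ k ≥ s ≥ 1, the following identity holds in ℚ: Σ_{j=s}^{n} [ 2ps/((2p−1)j + s) ]·C(2pj−1, j−s) · [ ((p−1)(n−j) + r + k − s + 1)/(p(n−j) + r + 1) ]·C(2(p(n−j)+r+1), n−j−k+s) = [ ((p−1)n + r + k + 1)/(pn + r + 1) ]·C(2(pn+r+1), n−k). -/

import Mathlib

/-- Binomial coefficient `C(m, j)` with integer lower index `j`,
equal to `0` when `j < 0` or `j > m`. -/
def ichoose (m : ℕ) (j : ℤ) : ℚ :=
  if j < 0 then 0 else (m.choose j.toNat : ℚ)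

/-!
Put `j = s + i`, `x = 2ps`, `z = 2p`. The left factor of the `j`-th summand is the Rothe–Hagen
coefficient `x/(x+iz)·C(x+iz, i)`, and the right factor is a Catalan-triangle entry
`(a-l)/a·C(2a, l)`, which equals the ballot difference `C(2a-1, l) - C(2a-1, l-1)` with
`2a - 1 = y + lz`, `y = 2p(k-s) + 2r + 1`. Both halves of the sum are then convolutions evaluated
by the Rothe–Hagen identity `Σ_{i+l=N} x/(x+iz)·C(x+iz, i)·C(y+lz, l) = C(x+y+Nz, N)`, and the
resulting ballot difference is again a Catalan-triangle entry.
-/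

open Finset Finset.Nat

theorem ichoose_natCast (m j : ℕ) : ichoose m j = m.choose j := by
  simp [ichoose]

theorem ichoose_of_neg (m : ℕ) {j : ℤ} (hj : j < 0) : ichoose m j = 0 := if_pos hj

def rotheSum (y z x N : ℕ) : ℕ :=
  ∑ il ∈ antidiagonal N, (x + il.1 * z).choose il.1 * (y + il.2 * z).choose il.2

theorem rotheSum_succ_succ (y z x N : ℕ) :
    rotheSum y z (x + 1) (N + 1) = rotheSum y z x (N + 1) + rotheSum y z (x + z) N := by
  simp only [rotheSum, sum_antidiagonal_succ, Nat.choose_zero_right, one_mul, zero_mul, add_zero]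
  rw [add_assoc, ← sum_add_distrib]
  congr 1
  refine sum_congr rfl fun il _ => ?_
  rw [show x + 1 + (il.1 + 1) * z = x + (il.1 + 1) * z + 1 by ring, Nat.choose_succ_succ',
    show x + z + il.1 * z = x + (il.1 + 1) * z by ring]
  ring

def rotheCoeff (x z i : ℕ) : ℚ :=
  (x : ℚ) / (x + i * z) * ((x + i * z).choose i : ℚ)

section RotheHagen

variable (y : ℕ) {z : ℕ}

theorem rotheSum_zero_succ (hz : 0 < z) (N : ℕ) :
    rotheSum y z 0 (N + 1) = z * rotheSum y z (z - 1) N + (y + (N + 1) * z).choose (N + 1) := by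
  have hchoose (i : ℕ) : ((i + 1) * z).choose (i + 1) = z * (z - 1 + i * z).choose i := by
    refine Nat.eq_of_mul_eq_mul_right (by omega : 0 < i + 1) ?_
    have h := Nat.add_one_mul_choose_eq (z - 1 + i * z) i
    rw [show z - 1 + i * z + 1 = (i + 1) * z by
      rw [add_right_comm, Nat.sub_add_cancel hz]; ring] at h
    rw [← h]
    ring
  simp only [rotheSum, sum_antidiagonal_succ, zero_add, hchoose, mul_sum, Nat.choose_zero_right,
    one_mul, zero_mul]
  simp only [mul_assoc, add_comm]

-- Together with `rotheCoeff_succ`, this is the Rothe–Hagen identity.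
theorem rotheSum_succ (hz : 0 < z) (N x : ℕ) :
    rotheSum y z x (N + 1)
      = z * rotheSum y z (x + z - 1) N + (x + y + (N + 1) * z).choose (N + 1) := by
  induction N generalizing x with
  | zero =>
    simp only [rotheSum, zero_add, sum_antidiagonal_succ, zero_mul, add_zero,
      Nat.choose_zero_right, one_mul, Nat.choose_one_right, HasAntidiagonal.antidiagonal_zero,
      sum_singleton, mul_one]
    omega
  | succ N ih =>
    induction x with
    | zero => simpa using rotheSum_zero_succ y hz (N + 1)
    | succ x ihx =>
      have hpascal := rotheSum_succ_succ y z (x + z - 1) N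
      rw [Nat.sub_add_cancel (by omega), show x + z - 1 + z = x + z + z - 1 by omega] at hpascal
      have hbinom := Nat.choose_succ_succ' (x + y + (N + 1 + 1) * z) (N + 1)
      have hxz := ih (x + z)
      rw [show x + z + y + (N + 1) * z = x + y + (N + 1 + 1) * z by ring] at hxz
      rw [rotheSum_succ_succ, show x + 1 + z - 1 = x + z by omega,
        show x + 1 + y + (N + 1 + 1) * z = x + y + (N + 1 + 1) * z + 1 by ring, hbinom, ihx]
      linear_combination hxz - z * hpascal

variable {x : ℕ}

theorem rotheCoeff_zero (hx : 0 < x) : rotheCoeff x z 0 = 1 := by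
  simp [rotheCoeff, hx.ne']

theorem rotheCoeff_succ (hx : 0 < x) (i : ℕ) :
    rotheCoeff x z (i + 1)
      = (x + (i + 1) * z).choose (i + 1) - z * ((x + z - 1 + i * z).choose i : ℚ) := by
  have h := Nat.add_one_mul_choose_eq (x + z - 1 + i * z) i
  rw [show x + z - 1 + i * z + 1 = x + (i + 1) * z by
    rw [add_right_comm, Nat.sub_add_cancel (by omega)]; ring] at h
  have hq : ((x + (i + 1) * z : ℕ) : ℚ) * ((x + z - 1 + i * z).choose i : ℚ)
      = ((x + (i + 1) * z).choose (i + 1) : ℚ) * (i + 1) := by exact_mod_cast h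
  have hpos : (x : ℚ) + ((i + 1 : ℕ) : ℚ) * z ≠ 0 := by positivity
  rw [rotheCoeff, div_mul_eq_mul_div, div_eq_iff hpos]
  push_cast at hq ⊢
  linear_combination (z : ℚ) * hq

theorem sum_rotheCoeff_mul_choose (hx : 0 < x) (hz : 0 < z) (N : ℕ) :
    ∑ il ∈ antidiagonal N, rotheCoeff x z il.1 * (y + il.2 * z).choose il.2
      = (x + y + N * z).choose N := by
  cases N with
  | zero => simp [rotheCoeff_zero hx]
  | succ N =>
    have hsum : (rotheSum y z x (N + 1) : ℚ) = (y + (N + 1) * z).choose (N + 1)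
        + ∑ il ∈ antidiagonal N,
          ((x + (il.1 + 1) * z).choose (il.1 + 1) : ℚ) * (y + il.2 * z).choose il.2 := by
      simp [rotheSum, sum_antidiagonal_succ]
    have hrec : (rotheSum y z x (N + 1) : ℚ)
        = z * rotheSum y z (x + z - 1) N + (x + y + (N + 1) * z).choose (N + 1) := by
      exact_mod_cast rotheSum_succ y hz N x
    rw [sum_antidiagonal_succ]
    simp only [rotheCoeff_zero hx, rotheCoeff_succ hx, sub_mul, sum_sub_distrib, mul_assoc,
      ← mul_sum]
    push_cast [rotheSum] at hsum hrec
    linear_combination hrec - hsum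

theorem sum_rotheCoeff_mul_ballot (hx : 0 < x) (hz : 0 < z) (N : ℕ) :
    ∑ il ∈ antidiagonal N, rotheCoeff x z il.1
        * (ichoose (y + il.2 * z) il.2 - ichoose (y + il.2 * z) ((il.2 : ℤ) - 1))
      = ichoose (x + y + N * z) N - ichoose (x + y + N * z) ((N : ℤ) - 1) := by
  simp only [mul_sub, sum_sub_distrib, ichoose_natCast, sum_rotheCoeff_mul_choose y hx hz]
  congr 1
  cases N with
  | zero => simp [ichoose_of_neg]
  | succ N =>
    rw [sum_antidiagonal_succ']
    simp only [Nat.cast_add, Nat.cast_one, add_sub_cancel_right, ichoose_natCast,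
      ichoose_of_neg _ (show (((0 : ℕ) : ℤ) - 1) < 0 by omega), mul_zero, zero_add]
    rw [show x + y + (N + 1) * z = x + (y + z) + N * z by ring,
      ← sum_rotheCoeff_mul_choose (y + z) hx hz N]
    refine sum_congr rfl fun il _ => ?_
    rw [show y + (il.2 + 1) * z = y + z + il.2 * z by ring]

end RotheHagen

/-- `catalanEntry (n + 1) (n - k)` is the entry `d_{n,k} = (k+1)/(n+1) C(2(n+1), n-k)` of
Catalan's triangle. -/
def catalanEntry (a : ℕ) (l : ℤ) : ℚ :=
  (a - l) / a * ichoose (2 * a) l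

theorem catalanEntry_succ (a : ℕ) (l : ℤ) :
    catalanEntry (a + 1) l = ichoose (2 * a + 1) l - ichoose (2 * a + 1) (l - 1) := by
  rcases lt_or_ge l 0 with hl | hl
  · simp [catalanEntry, ichoose_of_neg _ hl, ichoose_of_neg _ (show l - 1 < 0 by omega)]
  obtain ⟨m, rfl⟩ := Int.eq_ofNat_of_zero_le hl
  cases m with
  | zero => simp [catalanEntry, ichoose, Nat.cast_add_one_ne_zero]
  | succ m =>
    have hpascal := Nat.choose_succ_succ' (2 * a + 1) m
    have habsorb := Nat.add_one_mul_choose_eq (2 * a + 1) m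
    rw [show 2 * a + 1 + 1 = 2 * (a + 1) by ring] at hpascal habsorb
    rw [show ((m + 1 : ℕ) : ℤ) - 1 = m by omega]
    simp only [catalanEntry, ichoose_natCast]
    rw [div_mul_eq_mul_div, div_eq_iff (by positivity)]
    have hq : ((2 * (a + 1) : ℕ) : ℚ) * ((2 * a + 1).choose m : ℚ)
        = ((2 * (a + 1)).choose (m + 1) : ℚ) * (m + 1) := by exact_mod_cast habsorb
    have hp : ((2 * (a + 1)).choose (m + 1) : ℚ)
        = (2 * a + 1).choose m + (2 * a + 1).choose (m + 1) := by exact_mod_cast hpascal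
    push_cast at hq ⊢
    linear_combination ((a : ℚ) + 1) * hp + hq

theorem rotheCoeff_two_mul (p s i : ℕ) :
    rotheCoeff (2 * p * s) (2 * p) i
      = 2 * (p : ℚ) * s / ((2 * (p : ℚ) - 1) * ((s + i : ℕ) : ℚ) + s)
        * ((2 * p * (s + i) - 1).choose i : ℚ) := by
  rcases Nat.eq_zero_or_pos (p * s) with hps | hps
  · rcases Nat.mul_eq_zero.mp hps with rfl | rfl <;> simp [rotheCoeff]
  obtain ⟨hp, hs⟩ := CanonicallyOrderedAdd.mul_pos.mp hps
  have hiM : i < 2 * p * (s + i) := by nlinarith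
  have habsorb := Nat.choose_mul_succ_eq (2 * p * (s + i) - 1) i
  rw [Nat.sub_add_cancel (by omega)] at habsorb
  have hq : ((2 * p * (s + i) - 1).choose i : ℚ) * ((2 * p * (s + i) : ℕ) : ℚ)
      = ((2 * p * (s + i)).choose i : ℚ) * (((2 * p * (s + i) : ℕ) : ℚ) - i) := by
    rw [← Nat.cast_sub hiM.le]
    exact_mod_cast habsorb
  rw [rotheCoeff, show 2 * p * s + i * (2 * p) = 2 * p * (s + i) by ring,
    div_mul_eq_mul_div, div_mul_eq_mul_div, div_eq_div_iff (by positivity) ?_]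
  · push_cast at hq ⊢
    linear_combination -2 * (p : ℚ) * s * hq
  have hp' : (1 : ℚ) ≤ p := by exact_mod_cast hp
  have hs' : (1 : ℚ) ≤ s := by exact_mod_cast hs
  push_cast
  nlinarith

def extractionSummand (p r n k s j : ℕ) : ℚ :=
  (2 * (p : ℚ) * s / ((2 * (p : ℚ) - 1) * j + s)) * ((2 * p * j - 1).choose (j - s) : ℚ)
    * ((((p : ℚ) - 1) * ((n : ℚ) - j) + r + k - s + 1) / ((p : ℚ) * ((n : ℚ) - j) + r + 1))
    * ichoose (2 * (p * (n - j) + r + 1)) ((n : ℤ) - j - k + s)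

theorem extractionSummand_eq (p r s t i l : ℕ) :
    extractionSummand p r (s + t + (i + l)) (s + t) s (s + i)
      = rotheCoeff (2 * p * s) (2 * p) i * catalanEntry (p * (t + l) + r + 1) l := by
  rw [extractionSummand, catalanEntry, rotheCoeff_two_mul, Nat.add_sub_cancel_left,
    show s + t + (i + l) - (s + i) = t + l by omega,
    show ((s + t + (i + l) : ℕ) : ℤ) - ((s + i : ℕ) : ℤ) - ((s + t : ℕ) : ℤ) + s = l by
      push_cast; ring]
  push_cast
  ring

theorem sum_extractionSummand (p r s t m : ℕ) :
    ∑ j ∈ Icc s (s + t + m), extractionSummand p r (s + t + m) (s + t) s j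
      = ∑ il ∈ antidiagonal m,
          rotheCoeff (2 * p * s) (2 * p) il.1 * catalanEntry (p * (t + il.2) + r + 1) il.2 := by
  have hvanish : ∀ j ∈ Icc s (s + t + m), j ∉ Icc s (s + m) →
      extractionSummand p r (s + t + m) (s + t) s j = 0 := by
    intro j hj hj'
    simp only [mem_Icc] at hj hj'
    rw [extractionSummand, ichoose_of_neg _ (by omega), mul_zero]
  rw [← sum_subset (Icc_subset_Icc_right (by omega)) hvanish, ← Ico_add_one_right_eq_Icc,
    sum_Ico_eq_sum_range, show s + m + 1 - s = m + 1 by omega,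
    ← sum_antidiagonal_eq_sum_range_succ_mk (fun il => extractionSummand p r _ _ s (s + il.1))]
  refine sum_congr rfl fun il hil => ?_
  rw [← mem_antidiagonal.mp hil, extractionSummand_eq]

/-- The identity coming from Catalan's triangle: for `p ≥ 1`, `r ≥ 0`, `n ≥ k ≥ s ≥ 1`,
`Σ_{j=s}^{n} (2ps/((2p−1)j+s))·C(2pj−1, j−s) ·
  (((p−1)(n−j)+r+k−s+1)/(p(n−j)+r+1))·C(2(p(n−j)+r+1), n−j−k+s)
  = (((p−1)n+r+k+1)/(pn+r+1))·C(2(pn+r+1), n−k)`. -/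
theorem catalan_triangle_extraction_identity (p r n k s : ℕ)
    (hp : 1 ≤ p) (hs : 1 ≤ s) (hsk : s ≤ k) (hkn : k ≤ n) :
    ∑ j ∈ Finset.Icc s n,
        (2 * (p : ℚ) * s / ((2 * (p : ℚ) - 1) * j + s)) * ((2 * p * j - 1).choose (j - s) : ℚ)
          * ((((p : ℚ) - 1) * ((n : ℚ) - j) + r + k - s + 1)
              / ((p : ℚ) * ((n : ℚ) - j) + r + 1))
          * ichoose (2 * (p * (n - j) + r + 1)) ((n : ℤ) - j - k + s)
      = ((((p : ℚ) - 1) * n + r + k + 1) / ((p : ℚ) * n + r + 1))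
          * ((2 * (p * n + r + 1)).choose (n - k) : ℚ) := by
  obtain ⟨t, rfl⟩ := Nat.exists_eq_add_of_le hsk
  obtain ⟨m, rfl⟩ := Nat.exists_eq_add_of_le hkn
  have hx : 0 < 2 * p * s := by positivity
  have hz : 0 < 2 * p := by positivity
  have hy (l : ℕ) : 2 * (p * (t + l) + r) + 1 = 2 * p * t + 2 * r + 1 + l * (2 * p) := by ring
  calc ∑ j ∈ Icc s (s + t + m), extractionSummand p r (s + t + m) (s + t) s j
      = ∑ il ∈ antidiagonal m, rotheCoeff (2 * p * s) (2 * p) il.1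
          * (ichoose (2 * p * t + 2 * r + 1 + il.2 * (2 * p)) il.2
            - ichoose (2 * p * t + 2 * r + 1 + il.2 * (2 * p)) ((il.2 : ℤ) - 1)) := by
        rw [sum_extractionSummand]
        exact sum_congr rfl fun il _ => by rw [catalanEntry_succ, hy]
    _ = catalanEntry (p * (s + t + m) + r + 1) m := by
        rw [sum_rotheCoeff_mul_ballot _ hx hz, catalanEntry_succ]
        congr 2 <;> ring
    _ = _ := by
        rw [catalanEntry, ichoose_natCast, Nat.add_sub_cancel_left]
        push_cast
        ring
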